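/- arXiv:2002.00900 — 4 statements merged into one kernel-verified Lean document; each statement's English description precedes it below -/
import Mathlib

section
/- Let q_1,...,q_d and s be elements of a commutative ℚ-algebra and set Q(z) = Σ_{j=1}^d q_j z^j. For any integers μ and a with μ + a > 0, one has the 'peeling' identity (μ + a) · Σ_{λ ⊢ μ+a} (μs)^{ℓ(λ)} q_λ / |Aut(λ)| = μ · Σ_{r=1}^{d} r q_r s · Σ_{λ ⊢ μ+a-r} (μs)^{ℓ(λ)} q_λ / |Aut(λ)|, where sums range over partitions λ with all parts at most d, q_λ = q_{λ_1}···q_{λ_{ℓ(λ)}}, and |Aut(λ)| is the product of factorials of part multiplicities. -/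
open PowerSeries Finset

/-- `|Aut(λ)|`: the product of the factorials of the multiplicities of the parts. -/
def autCard {n : ℕ} (P : n.Partition) : ℕ :=
  ∏ i ∈ P.parts.toFinset, (P.parts.count i).factorial

/-- The sum `∑_{λ ⊢ n, parts ≤ d} x^{ℓ(λ)} q_λ / |Aut(λ)|`. -/
noncomputable def partSum (R : Type*) [CommRing R] [Algebra ℚ R]
    (d : ℕ) (q : ℕ → R) (x : R) (n : ℕ) : R :=
  ∑ P ∈ Finset.univ.filter (fun P : n.Partition => ∀ i ∈ P.parts, i ≤ d),
    algebraMap ℚ R ((autCard P : ℚ))⁻¹ * x ^ (Multiset.card P.parts) * (P.parts.map q).prod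

lemma multiset_sum_eq_sum_count (m : Multiset ℕ) :
    m.sum = ∑ i ∈ m.toFinset, m.count i * i := by
  induction m using Multiset.induction with
  | empty => simp
  | cons a s ih =>
    rw [Multiset.sum_cons, ih]
    by_cases h : a ∈ s.toFinset
    · rw [Multiset.toFinset_cons, Finset.insert_eq_self.2 h,
        ← Finset.sum_erase_add _ _ h, ← Finset.sum_erase_add _ _ h]
      have : ∀ i ∈ s.toFinset.erase a, ((a ::ₘ s).count i) * i = s.count i * i := by
        intro i hi
        rw [Multiset.count_cons_of_ne (Finset.ne_of_mem_erase hi)]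
      rw [Finset.sum_congr rfl this, Multiset.count_cons_self]
      ring
    · rw [Multiset.toFinset_cons, Finset.sum_insert h, Multiset.count_cons_self,
        Multiset.count_eq_zero.2 (fun hc => h (Multiset.mem_toFinset.2 hc))]
      have : ∀ i ∈ s.toFinset, ((a ::ₘ s).count i) * i = s.count i * i := by
        intro i hi
        rw [Multiset.count_cons_of_ne]
        rintro rfl; exact h hi
      rw [Finset.sum_congr rfl this]
      ring

lemma prod_factorial_cons (m : Multiset ℕ) (r : ℕ) :
    ∏ i ∈ (r ::ₘ m).toFinset, ((r ::ₘ m).count i).factorial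
      = (m.count r + 1) * ∏ i ∈ m.toFinset, (m.count i).factorial := by
  by_cases h : r ∈ m.toFinset
  · rw [Multiset.toFinset_cons, Finset.insert_eq_self.2 h,
      ← Finset.prod_erase_mul _ _ h, ← Finset.prod_erase_mul _ _ h]
    have : ∀ i ∈ m.toFinset.erase r,
        ((r ::ₘ m).count i).factorial = (m.count i).factorial := by
      intro i hi
      rw [Multiset.count_cons_of_ne (Finset.ne_of_mem_erase hi)]
    rw [Finset.prod_congr rfl this, Multiset.count_cons_self, Nat.factorial_succ]
    ring
  · rw [Multiset.toFinset_cons, Finset.prod_insert h, Multiset.count_cons_self,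
      Multiset.count_eq_zero.2 (fun hc => h (Multiset.mem_toFinset.2 hc))]
    have : ∀ i ∈ m.toFinset,
        ((r ::ₘ m).count i).factorial = (m.count i).factorial := by
      intro i hi
      rw [Multiset.count_cons_of_ne]
      rintro rfl; exact h hi
    rw [Finset.prod_congr rfl this]
    simp [Nat.factorial]

lemma term_cons {R : Type*} [CommRing R] [Algebra ℚ R] (q : ℕ → R) (x : R) {n n' : ℕ}
    (r : ℕ) (P : n'.Partition) (Q : n.Partition) (hQ : Q.parts = r ::ₘ P.parts) :
    (Q.parts.count r : R) * (algebraMap ℚ R ((autCard Q : ℚ))⁻¹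
        * x ^ (Multiset.card Q.parts) * (Q.parts.map q).prod)
      = q r * x * (algebraMap ℚ R ((autCard P : ℚ))⁻¹
        * x ^ (Multiset.card P.parts) * (P.parts.map q).prod) := by
  set m := P.parts with hm
  have hA : autCard Q = (m.count r + 1) * autCard P := by
    unfold autCard
    rw [hQ]
    exact prod_factorial_cons m r
  have hne2 : (autCard P : ℚ) ≠ 0 := by
    unfold autCard
    push_cast
    apply Finset.prod_ne_zero_iff.2
    intro i _
    exact_mod_cast (Nat.factorial_pos _).ne'
  have hinv : ((m.count r + 1 : ℕ) : ℚ) * ((autCard Q : ℚ))⁻¹ = (autCard P : ℚ)⁻¹ := by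
    rw [hA]
    push_cast
    rw [mul_inv]
    rw [← mul_assoc, mul_inv_cancel₀ (by positivity), one_mul]
  rw [hQ, Multiset.count_cons_self, Multiset.card_cons, Multiset.map_cons, Multiset.prod_cons]
  have hcast : ((m.count r + 1 : ℕ) : R) = algebraMap ℚ R ((m.count r + 1 : ℕ) : ℚ) := by
    simp
  push_cast [hcast]
  rw [show ((m.count r : R) + 1) * (algebraMap ℚ R ((autCard Q : ℚ))⁻¹
        * x ^ (Multiset.card m + 1) * (q r * (m.map q).prod))
      = (((m.count r : R) + 1) * algebraMap ℚ R ((autCard Q : ℚ))⁻¹)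
        * x ^ (Multiset.card m + 1) * (q r * (m.map q).prod) by ring]
  have : ((m.count r : R) + 1) * algebraMap ℚ R ((autCard Q : ℚ))⁻¹
      = algebraMap ℚ R ((autCard P : ℚ))⁻¹ := by
    rw [← hinv, map_mul]
    push_cast
    ring
  rw [this, pow_succ]
  ring

set_option maxHeartbeats 1000000 in
/-- the key single-`r` identity. -/
lemma star_aux (R : Type*) [CommRing R] [Algebra ℚ R]
    (d : ℕ) (q : ℕ → R) (x : R) (n r : ℕ) (hr1 : 1 ≤ r) (hrd : r ≤ d) (hrn : r ≤ n) :
    q r * x * partSum R d q x (n - r)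
      = ∑ P ∈ Finset.univ.filter (fun P : n.Partition => ∀ i ∈ P.parts, i ≤ d),
          (P.parts.count r : R) *
            (algebraMap ℚ R ((autCard P : ℚ))⁻¹ * x ^ (Multiset.card P.parts)
              * (P.parts.map q).prod) := by
  -- restrict RHS to partitions containing r
  rw [show (Finset.univ.filter (fun P : n.Partition => ∀ i ∈ P.parts, i ≤ d))
      = (Finset.univ.filter (fun P : n.Partition => (∀ i ∈ P.parts, i ≤ d) ∧ r ∈ P.parts))
        ∪ (Finset.univ.filter (fun P : n.Partition => (∀ i ∈ P.parts, i ≤ d) ∧ r ∉ P.parts))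
    by rw [← Finset.filter_or]; apply Finset.filter_congr; intro P _; tauto]
  rw [Finset.sum_union (by
      rw [Finset.disjoint_filter]
      intro P _ h1 h2
      exact h2.2 h1.2)]
  have h2 : ∑ P ∈ Finset.univ.filter
      (fun P : n.Partition => (∀ i ∈ P.parts, i ≤ d) ∧ r ∉ P.parts),
      (P.parts.count r : R) *
        (algebraMap ℚ R ((autCard P : ℚ))⁻¹ * x ^ (Multiset.card P.parts)
          * (P.parts.map q).prod) = 0 := by
    apply Finset.sum_eq_zero
    intro P hP
    rw [Finset.mem_filter] at hP
    rw [Multiset.count_eq_zero.2 hP.2.2]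
    simp
  rw [h2, add_zero, partSum, Finset.mul_sum]
  apply Finset.sum_bij'
    (i := fun (P : (n - r).Partition) _ =>
      (⟨r ::ₘ P.parts, by
          intro i hi
          rcases Multiset.mem_cons.1 hi with h | h
          · omega
          · exact P.parts_pos h, by
          rw [Multiset.sum_cons, P.parts_sum]; omega⟩ : n.Partition))
    (j := fun (P : n.Partition) hP =>
      (⟨P.parts.erase r, by
          intro i hi
          exact P.parts_pos (Multiset.mem_of_mem_erase hi), by
          have hmem : r ∈ P.parts := (Finset.mem_filter.1 hP).2.2
          have := P.parts_sum
          have h3 : r + (P.parts.erase r).sum = n := by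
            rw [← Multiset.sum_cons, Multiset.cons_erase hmem, this]
          omega⟩ : (n - r).Partition))
  -- left_inv
  · intro P hP
    apply Nat.Partition.ext
    simp [Multiset.erase_cons_head]
  -- right_inv
  · intro P hP
    apply Nat.Partition.ext
    exact Multiset.cons_erase (Finset.mem_filter.1 hP).2.2
  -- value equality
  · intro P hP
    exact (term_cons q x r P _ rfl).symm
  -- hi
  · intro P hP
    rw [Finset.mem_filter] at hP ⊢
    refine ⟨Finset.mem_univ _, ?_, Multiset.mem_cons_self _ _⟩
    intro i hi
    rcases Multiset.mem_cons.1 hi with h | h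
    · omega
    · exact hP.2 i h
  -- hj
  · intro P hP
    rw [Finset.mem_filter] at hP ⊢
    exact ⟨Finset.mem_univ _, fun i hi => hP.2.1 i (Multiset.mem_of_mem_erase hi)⟩

lemma core (R : Type*) [CommRing R] [Algebra ℚ R]
    (d : ℕ) (q : ℕ → R) (x : R) (n : ℕ) (hn : 0 < n) :
    (n : R) * partSum R d q x n
      = ∑ r ∈ Finset.Icc 1 d, (r : R) * q r * x *
          (if r ≤ n then partSum R d q x (n - r) else 0) := by
  rw [partSum, Finset.mul_sum]
  have lhs_eq : ∀ P ∈ Finset.univ.filter (fun P : n.Partition => ∀ i ∈ P.parts, i ≤ d),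
      (n : R) * (algebraMap ℚ R ((autCard P : ℚ))⁻¹ * x ^ (Multiset.card P.parts)
        * (P.parts.map q).prod)
      = ∑ r ∈ Finset.Icc 1 d, ((r : R) * (P.parts.count r : R)) *
          (algebraMap ℚ R ((autCard P : ℚ))⁻¹ * x ^ (Multiset.card P.parts)
            * (P.parts.map q).prod) := by
    intro P hP
    rw [← Finset.sum_mul]
    congr 1
    have hsub : P.parts.toFinset ⊆ Finset.Icc 1 d := by
      intro i hi
      rw [Multiset.mem_toFinset] at hi
      exact Finset.mem_Icc.2 ⟨P.parts_pos hi, (Finset.mem_filter.1 hP).2 i hi⟩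
    have : (n : R) = ((∑ i ∈ P.parts.toFinset, P.parts.count i * i : ℕ) : R) := by
      rw [← multiset_sum_eq_sum_count, P.parts_sum]
    rw [this, Finset.sum_subset hsub (by
      intro i _ hi
      rw [Multiset.count_eq_zero.2 (fun hc => hi (Multiset.mem_toFinset.2 hc))]
      ring)]
    push_cast
    apply Finset.sum_congr rfl
    intro i _
    ring
  rw [Finset.sum_congr rfl lhs_eq, Finset.sum_comm]
  apply Finset.sum_congr rfl
  intro r hr
  rw [Finset.mem_Icc] at hr
  by_cases hrn : r ≤ n
  · rw [if_pos hrn]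
    rw [show (r : R) * q r * x * partSum R d q x (n - r)
        = (r : R) * (q r * x * partSum R d q x (n - r)) by ring,
      star_aux R d q x n r hr.1 hr.2 hrn, Finset.mul_sum]
    apply Finset.sum_congr rfl
    intro P _
    ring
  · rw [if_neg hrn, mul_zero]
    apply Finset.sum_eq_zero
    intro P _
    have : P.parts.count r = 0 := by
      rw [Multiset.count_eq_zero]
      intro hmem
      have := Multiset.single_le_sum (fun x _ => Nat.zero_le x) r hmem
      rw [P.parts_sum] at this
      omega
    rw [this]
    push_cast
    ring

/-- The peeling identity: for integers `μ`, `a` with `μ + a > 0`,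
`(μ+a) ∑_{λ ⊢ μ+a} (μs)^{ℓ(λ)} q_λ/|Aut(λ)| =
  μ ∑_{r=1}^d r q_r s ∑_{λ ⊢ μ+a-r} (μs)^{ℓ(λ)} q_λ/|Aut(λ)|`,
where all partitions have parts at most `d`. -/
theorem peeling_identity (R : Type*) [CommRing R] [Algebra ℚ R]
    (d : ℕ) (q : ℕ → R) (s : R) (μ a : ℤ) (h : 0 < μ + a) :
    ((μ + a : ℤ) : R) * partSum R d q ((μ : R) * s) ((μ + a).toNat)
      = (μ : R) * ∑ r ∈ Finset.Icc 1 d, (r : R) * q r * s *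
          (if (r : ℤ) ≤ μ + a then partSum R d q ((μ : R) * s) ((μ + a).toNat - r) else 0) := by
  set n := (μ + a).toNat with hn
  have hn0 : 0 < n := by omega
  have hcast : ((μ + a : ℤ) : R) = (n : R) := by
    rw [hn]
    rw [show ((μ + a).toNat : R) = (((μ+a).toNat : ℤ) : R) by push_cast; ring]
    congr 1
    omega
  rw [hcast, core R d q ((μ : R) * s) n hn0, Finset.mul_sum]
  apply Finset.sum_congr rfl
  intro r hr
  have : ((r : ℤ) ≤ μ + a) ↔ r ≤ n := by omega
  by_cases hc : r ≤ n
  · rw [if_pos hc, if_pos (this.2 hc)]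
    ring
  · rw [if_neg hc, if_neg (fun hx => hc (this.1 hx))]
    ring
end

section
/- For any positive integer k and positive real (or rational) numbers a_1, ..., a_k, the symmetrized sum (1/k!) · Σ_{π ∈ S_k} 1 / ( a_{π(1)} · (a_{π(1)} + a_{π(2)}) · ··· · (a_{π(1)} + ··· + a_{π(k)}) ) equals 1 / (k! · a_1 a_2 ··· a_k). -/
open Finset

private def permAux {k : ℕ} (m : Fin (k + 1)) (e : Equiv.Perm (Fin k)) :
    Equiv.Perm (Fin (k + 1)) :=
  finSuccEquivLast.trans (e.optionCongr.trans (finSuccEquiv' m).symm)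

private lemma permAux_castSucc {k : ℕ} (m : Fin (k + 1)) (e : Equiv.Perm (Fin k)) (i : Fin k) :
    permAux m e (Fin.castSucc i) = m.succAbove (e i) := by
  simp [permAux, finSuccEquivLast_castSucc, finSuccEquiv'_symm_some]

private lemma permAux_last {k : ℕ} (m : Fin (k + 1)) (e : Equiv.Perm (Fin k)) :
    permAux m e (Fin.last k) = m := by
  simp [permAux, finSuccEquivLast_last, finSuccEquiv'_symm_none]

private lemma permAux_injective {k : ℕ} :
    Function.Injective (fun p : Fin (k + 1) × Equiv.Perm (Fin k) => permAux p.1 p.2) := by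
  rintro ⟨m, e⟩ ⟨m', e'⟩ h
  simp only at h
  have hm : m = m' := by
    have := congrArg (fun π : Equiv.Perm (Fin (k + 1)) => π (Fin.last k)) h
    simpa [permAux_last] using this
  subst hm
  refine Prod.ext rfl ?_
  ext i
  have := congrArg (fun π : Equiv.Perm (Fin (k + 1)) => π (Fin.castSucc i)) h
  simp only [permAux_castSucc] at this
  exact congrArg Fin.val (m.succAbove_right_injective this)

private lemma Iic_castSucc_eq {k : ℕ} (j : Fin k) :
    Finset.Iic (Fin.castSucc j) = (Finset.Iic j).map Fin.castSuccEmb := by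
  ext x
  simp only [mem_Iic, mem_map, Fin.castSuccEmb_apply]
  constructor
  · intro hx
    have hxv : (x : ℕ) ≤ (j : ℕ) := hx
    have hxk : (x : ℕ) < k := lt_of_le_of_lt hxv j.2
    exact ⟨⟨x, hxk⟩, hxv, Fin.ext rfl⟩
  · rintro ⟨y, hy, rfl⟩
    exact hy

private lemma key (k : ℕ) (a : Fin k → ℝ) (ha : ∀ i, 0 < a i) :
    ∑ π : Equiv.Perm (Fin k), ∏ j : Fin k, (∑ i ∈ Finset.Iic j, a (π i))⁻¹
      = (∏ i, a i)⁻¹ := by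
  induction k with
  | zero => simp
  | succ k ih =>
    have hbij : Function.Bijective
        (fun p : Fin (k + 1) × Equiv.Perm (Fin k) => permAux p.1 p.2) := by
      rw [Fintype.bijective_iff_injective_and_card]
      refine ⟨permAux_injective, ?_⟩
      simp [Fintype.card_perm, Nat.factorial_succ, mul_comm]
    rw [← Fintype.sum_bijective _ hbij _ _ (fun _ => rfl)]
    rw [Fintype.sum_prod_type]
    have hS : (0 : ℝ) < ∑ i, a i :=
      Finset.sum_pos (fun i _ => ha i) ⟨0, mem_univ 0⟩
    have hterm : ∀ (m : Fin (k + 1)) (e : Equiv.Perm (Fin k)),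
        (∏ j : Fin (k + 1), (∑ i ∈ Finset.Iic j, a (permAux m e i))⁻¹)
          = (∑ i, a i)⁻¹ *
            ∏ j : Fin k, (∑ i ∈ Finset.Iic j, (a ∘ m.succAbove) (e i))⁻¹ := by
      intro m e
      rw [Fin.prod_univ_castSucc]
      have hlast : ∑ i ∈ Finset.Iic (Fin.last k), a (permAux m e i) = ∑ i, a i := by
        rw [show Finset.Iic (Fin.last k) = Finset.univ by ext x; simp [Fin.le_last]]
        exact Equiv.sum_comp (permAux m e) a
      rw [hlast, mul_comm]
      congr 1
      refine Finset.prod_congr rfl fun j _ => ?_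
      congr 1
      rw [Iic_castSucc_eq, Finset.sum_map]
      refine Finset.sum_congr rfl fun i _ => ?_
      exact congrArg a (permAux_castSucc m e i)
    calc ∑ m : Fin (k + 1), ∑ e : Equiv.Perm (Fin k),
          ∏ j : Fin (k + 1), (∑ i ∈ Finset.Iic j, a (permAux m e i))⁻¹
        = ∑ m : Fin (k + 1), (∑ i, a i)⁻¹ * (∏ i, (a ∘ m.succAbove) i)⁻¹ := by
          refine Finset.sum_congr rfl fun m _ => ?_
          rw [← ih (a ∘ m.succAbove) (fun i => ha _), Finset.mul_sum]
          exact Finset.sum_congr rfl fun e _ => hterm m e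
      _ = (∏ i, a i)⁻¹ := by
          have hprod : ∀ m : Fin (k + 1),
              (∏ i, (a ∘ m.succAbove) i)⁻¹ = a m * (∏ i, a i)⁻¹ := by
            intro m
            rw [Function.comp_def, Fin.prod_univ_succAbove a m, mul_inv, ← mul_assoc,
              mul_inv_cancel₀ (ha m).ne', one_mul]
          simp only [hprod]
          rw [← Finset.mul_sum, ← Finset.sum_mul, ← mul_assoc,
            inv_mul_cancel₀ hS.ne', one_mul]

/-- For positive reals `a_1, …, a_k`, the symmetrization
`(1/k!) ∑_{π ∈ S_k} 1/(a_{π(1)} (a_{π(1)}+a_{π(2)}) ⋯ (a_{π(1)}+⋯+a_{π(k)}))`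
equals `1/(k! a_1 ⋯ a_k)`. -/
theorem symmetrized_inverse_partial_sums (k : ℕ) (hk : 0 < k)
    (a : Fin k → ℝ) (ha : ∀ i, 0 < a i) :
    ((k.factorial : ℝ))⁻¹ *
        ∑ π : Equiv.Perm (Fin k), ∏ j : Fin k, (∑ i ∈ Finset.Iic j, a (π i))⁻¹
      = 1 / ((k.factorial : ℝ) * ∏ i, a i) := by
  rw [key k a ha, one_div, mul_inv]
end

section
/- Let x(z) = log z − s Q(z) with Q(z) = Σ_{j=1}^d q_j z^j over the field K = ℚ(s, q_1,...,q_d), and let A_{μ,j} = j·[z^{μ−j}] e^{μ s Q(z)} for 1 ≤ j ≤ d and μ ≥ 1. Then for fixed j, the K-valued sequences μ ↦ A_{μ,j}·μ^m (m ≥ 0 ranging over nonnegative integers, j over {1,...,d}) are K-linearly independent as functions of μ ∈ ℤ_{>0}. -/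
open Finset

/-- The field `K = ℚ(s, q_1, …, q_d)` of rational functions, with `s` the variable of index
`0` and `q_j` the variable of index `j`. -/
abbrev Kd (d : ℕ) := FractionRing (MvPolynomial (Fin (d + 1)) ℚ)

/-- The variable `s` in `K`. -/
noncomputable def sVar (d : ℕ) : Kd d :=
  algebraMap (MvPolynomial (Fin (d + 1)) ℚ) (Kd d) (MvPolynomial.X 0)

/-- The variables `q_j` in `K` for `1 ≤ j ≤ d` (and `0` otherwise). -/
noncomputable def qVar (d : ℕ) (j : ℕ) : Kd d :=
  if h : 1 ≤ j ∧ j ≤ d then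
    algebraMap (MvPolynomial (Fin (d + 1)) ℚ) (Kd d)
      (MvPolynomial.X (⟨j, by omega⟩ : Fin (d + 1)))
  else 0

/-- `A_{μ,j} = j · [z^{μ−j}] e^{μ s Q(z)} = j ∑_{λ ⊢ μ−j} (μs)^{ℓ(λ)} q_λ/|Aut(λ)|`
(zero when `μ < j`). -/
noncomputable def Aseq (d : ℕ) (j μ : ℕ) : Kd d :=
  if j ≤ μ then
    (j : Kd d) * ∑ P : (μ - j).Partition,
      ((autCard P : Kd d))⁻¹ * ((μ : Kd d) * sVar d) ^ (Multiset.card P.parts) *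
        (P.parts.map (qVar d)).prod
  else 0


/-!
The partition sum in `A_{μ,j}` is `[z^{μ-j}] e^{μ s Q(z)}`. Under the automorphism `s ↦ μ s` of `K`
(fixing the `q_j`), `A_{μ,j}` is the image of `j [z^μ] z^j e^{s Q(z)}`, and on polynomials
`μ^m [z^μ] p e^{s Q} = [z^μ] (Φ^m p) e^{s Q}` for `Φ p = z p' + s z Q' p`, the Euler operator
`z d/dz` conjugated by `e^{s Q}`. Since `Φ` raises degrees by exactly `d`, the polynomials
`Φ^m z^j` (`1 ≤ j ≤ d`) have the distinct degrees `j + d m`, hence are independent, and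
`p ↦ ([z^μ] p e^{s Q})_{μ ≥ 1}` is injective on polynomials without constant term.

The automorphism depends on `μ`, so we work over `ℚ`: clearing denominators and expanding in
monomials `s^a q^β`, on which it acts by `μ^a`, turns a `K`-relation among the `μ^m A_{μ,j}` into a
`ℚ`-relation among the sequences `s^a q^β μ^{m-a} j [z^μ] z^j e^{s Q}`, independent by the above
(after multiplying by a power of `μ` to make all exponents `m - a` nonnegative).
-/

open Polynomial
open scoped PowerSeries

theorem Polynomial.linearIndependent_of_natDegree_injective {R ι : Type*} [CommRing R]
    [NoZeroDivisors R] {p : ι → R[X]} (hp : ∀ i, p i ≠ 0)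
    (hinj : Function.Injective fun i => (p i).natDegree) : LinearIndependent R p := by
  classical
  refine linearIndependent_iff'.mpr fun s g hsum i hi => by_contra fun hgi => ?_
  obtain ⟨j, hj, hmax⟩ := (s.filter (g · ≠ 0)).exists_max_image (fun k => (p k).natDegree)
    ⟨i, Finset.mem_filter.mpr ⟨hi, hgi⟩⟩
  obtain ⟨hjs, hgj⟩ := Finset.mem_filter.mp hj
  have hcoeff := congrArg (Polynomial.coeff · (p j).natDegree) hsum
  simp only [Polynomial.finsetSum_coeff, Polynomial.coeff_smul, smul_eq_mul,
    Polynomial.coeff_zero] at hcoeff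
  rw [Finset.sum_eq_single j (fun k hk hkj => ?_) (absurd hjs)] at hcoeff
  · exact mul_ne_zero hgj (Polynomial.leadingCoeff_ne_zero.mpr (hp j)) hcoeff
  by_cases hgk : g k = 0
  · rw [hgk, zero_mul]
  have hlt : (p k).natDegree < (p j).natDegree :=
    (hmax k (Finset.mem_filter.mpr ⟨hk, hgk⟩)).lt_of_ne fun h => hkj (hinj h)
  rw [Polynomial.coeff_eq_zero_of_natDegree_lt hlt, mul_zero]

theorem linearIndependent_zpow_mul_of_pow_mul {K ι : Type*} [Field K] [CharZero K] (u : ι → ℕ+ → K)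
    (h : LinearIndependent K fun ib : ι × ℕ => fun μ : ℕ+ => (μ : K) ^ ib.2 * u ib.1 μ) :
    LinearIndependent K fun ib : ι × ℤ => fun μ : ℕ+ => (μ : K) ^ ib.2 * u ib.1 μ := by
  classical
  refine linearIndependent_iff_finset_linearIndependent.mpr fun s => ?_
  -- All exponents in `s` are `≥ -N`, so this subfamily is `μ ^ (-N)` times a subfamily of `h`.
  set N : ℕ := s.sup fun ib => (-ib.2).toNat
  have hN : ∀ ib ∈ s, 0 ≤ ib.2 + N := fun ib hib => by
    have := Finset.le_sup (f := fun ib : ι × ℤ => (-ib.2).toNat) hib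
    omega
  let e : s → ι × ℕ := fun ib => (ib.1.1, (ib.1.2 + N).toNat)
  have he : Function.Injective e := fun a b hab => by
    simp only [e, Prod.mk.injEq] at hab
    have := hN a a.2
    have := hN b b.2
    exact Subtype.ext (Prod.ext hab.1 (by omega))
  have hμ : ∀ μ : ℕ+, (μ : K) ≠ 0 := fun μ => Nat.cast_ne_zero.mpr μ.ne_zero
  let shift : (ℕ+ → K) →ₗ[K] (ℕ+ → K) := LinearMap.mulLeft K fun μ : ℕ+ => (μ : K) ^ (-N : ℤ)
  have hshift : LinearMap.ker shift = ⊥ := LinearMap.ker_eq_bot.mpr fun f g hfg =>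
    funext fun μ => mul_left_cancel₀ (zpow_ne_zero _ (hμ μ)) (congrFun hfg μ)
  have hcomp : (fun ib : ι × ℤ => fun μ : ℕ+ => (μ : K) ^ ib.2 * u ib.1 μ) ∘ Subtype.val
      = shift ∘ (fun ib : ι × ℕ => fun μ : ℕ+ => (μ : K) ^ ib.2 * u ib.1 μ) ∘ e := by
    funext ib μ
    simp only [Function.comp_apply, shift, LinearMap.mulLeft_apply, Pi.mul_apply, e, ← mul_assoc,
      ← zpow_natCast, ← zpow_add₀ (hμ μ), Int.toNat_of_nonneg (hN ib ib.2)]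
    ring_nf
  rw [hcomp]
  exact (h.comp e he).map' shift hshift

theorem LinearIndependent.of_smul_of_span_eq_top {R S M ι κ : Type*} [Semiring R] [Semiring S]
    [AddCommMonoid M] [Module R S] [Module S M] [Module R M] [IsScalarTower R S M]
    {v : ι → M} {w : κ → S} (hw : Submodule.span R (Set.range w) = ⊤)
    (h : LinearIndependent R fun i : ι × κ => w i.2 • v i.1) : LinearIndependent S v := by
  rw [LinearIndependent, Finsupp.linearCombination_smul] at h
  refine Function.Injective.of_comp_right (g := ⇑(Finsupp.mapRange.linearMap
    (Finsupp.linearCombination R w) ∘ₗ (Finsupp.curryLinearEquiv R).toLinearMap)) h ?_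
  refine (Finsupp.mapRange_surjective _ (map_zero _) ?_).comp (LinearEquiv.surjective _)
  rw [← LinearMap.range_eq_top, Finsupp.range_linearCombination, hw]

section PartitionExp

variable {K : Type*} [Field K]

theorem prod_factorial_count_cons {α : Type*} [DecidableEq α] (a : α) (m : Multiset α) :
    ∏ x ∈ (a ::ₘ m).toFinset, ((a ::ₘ m).count x).factorial
      = (m.count a + 1) * ∏ x ∈ m.toFinset, (m.count x).factorial := by
  have ha : a ∈ (a ::ₘ m).toFinset := by simp
  rw [Finset.prod_subset (f := fun x => (m.count x).factorial)
      (Multiset.toFinset_subset.mpr (Multiset.subset_cons m a)) fun x _ hx => by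
        rw [Multiset.count_eq_zero.mpr (by simpa using hx), Nat.factorial_zero],
    ← Finset.mul_prod_erase _ _ ha, ← Finset.mul_prod_erase _ (fun x => (m.count x).factorial) ha,
    Finset.prod_congr rfl fun x hx => by
      rw [Multiset.count_cons_of_ne (Finset.ne_of_mem_erase hx)],
    Multiset.count_cons_self, Nat.factorial_succ, mul_assoc]

theorem autCard_ne_zero {n : ℕ} (P : n.Partition) : autCard P ≠ 0 :=
  Finset.prod_ne_zero_iff.mpr fun _ _ => Nat.factorial_ne_zero _

noncomputable def partitionExp (w : ℕ → K) (n : ℕ) : K :=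
  ∑ P : n.Partition, (autCard P : K)⁻¹ * (P.parts.map w).prod

theorem partitionExp_zero (w : ℕ → K) : partitionExp w 0 = 1 := by
  simp [partitionExp, autCard]

variable [CharZero K]

theorem sum_count_mul_partitionExp_term (w : ℕ → K) {n i : ℕ} (hi : 1 ≤ i) (hin : i ≤ n) :
    ∑ P : n.Partition, (P.parts.count i : K) * ((autCard P : K)⁻¹ * (P.parts.map w).prod)
      = w i * partitionExp w (n - i) := by
  classical
  rw [partitionExp, Finset.mul_sum, ← Finset.sum_filter_of_ne (p := fun P => i ∈ P.parts)
      fun P _ h => by_contra fun hP => h (by simp [Multiset.count_eq_zero.mpr hP]),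
    Finset.sum_subtype _ (fun _ => Finset.mem_filter.trans (and_iff_right (Finset.mem_univ _))),
    ← (Nat.Partition.partitionWithPartEquiv hi hin).symm.sum_comp]
  refine Finset.sum_congr rfl fun Q _ => ?_
  have haut : autCard ((Nat.Partition.partitionWithPartEquiv hi hin).symm Q).1
      = (Q.parts.count i + 1) * autCard Q := by
    simp only [autCard, Nat.Partition.partitionWithPartEquiv_symm_apply_parts,
      prod_factorial_count_cons]
  have hQ : (autCard Q : K) ≠ 0 := Nat.cast_ne_zero.mpr (autCard_ne_zero Q)
  have hc : (Q.parts.count i : K) + 1 ≠ 0 := Nat.cast_add_one_ne_zero _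
  simp only [haut, Nat.Partition.partitionWithPartEquiv_symm_apply_parts, Multiset.count_cons_self,
    Multiset.map_cons, Multiset.prod_cons]
  push_cast
  field_simp

theorem natCast_mul_partitionExp (w : ℕ → K) (n : ℕ) :
    (n : K) * partitionExp w n
      = ∑ i ∈ Finset.range (n + 1), (i : K) * w i * partitionExp w (n - i) := by
  classical
  have hn : ∀ P : n.Partition,
      (n : K) = ∑ i ∈ Finset.range (n + 1), (P.parts.count i : K) * i := by
    intro P
    have hsub : P.parts.toFinset ⊆ Finset.range (n + 1) := fun x hx =>
      Finset.mem_range_succ_iff.mpr (Nat.Partition.le_of_mem_parts (Multiset.mem_toFinset.mp hx))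
    calc (n : K) = (P.parts.sum : K) := by rw [P.parts_sum]
      _ = _ := by
        rw [Finset.sum_multiset_count, Nat.cast_sum, Finset.sum_subset hsub fun x _ hx => by
          simp [Multiset.count_eq_zero.mpr (by simpa using hx)]]
        simp
  rw [partitionExp, Finset.mul_sum, Finset.sum_congr rfl fun P _ => by rw [hn P, Finset.sum_mul],
    Finset.sum_comm]
  refine Finset.sum_congr rfl fun i hi => ?_
  rcases Nat.eq_zero_or_pos i with rfl | hi0
  · simp
  rw [mul_assoc, ← sum_count_mul_partitionExp_term w hi0 (Finset.mem_range_succ_iff.mp hi),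
    Finset.mul_sum]
  exact Finset.sum_congr rfl fun P _ => by ring

end PartitionExp

section EulerOperator

variable {K : Type*} [Field K]

theorem Polynomial.coeff_X_mul_derivative (p : K[X]) (n : ℕ) :
    (X * derivative p).coeff n = n * p.coeff n := by
  cases n with
  | zero => simp
  | succ n => rw [coeff_X_mul, coeff_derivative, mul_comm]; push_cast; rfl

theorem PowerSeries.coeff_X_mul_derivative (f : K⟦X⟧) (n : ℕ) :
    coeff n (X * d⁄dX K f) = n * coeff n f := by
  cases n with
  | zero => simp
  | succ n => rw [coeff_succ_X_mul, coeff_derivative, mul_comm]; push_cast; rfl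

-- The Euler operator `X d/dX` conjugated by `e^W`: `eulerOp W p = e^{-W} X (p e^W)'`.
noncomputable def eulerOp (W p : K[X]) : K[X] := X * derivative p + X * derivative W * p

-- By the exponential formula, `expSeries W = exp (W - W.coeff 0)`.
noncomputable def expSeries (W : K[X]) : K⟦X⟧ := PowerSeries.mk (partitionExp W.coeff)

theorem constantCoeff_expSeries (W : K[X]) : PowerSeries.constantCoeff (expSeries W) = 1 := by
  rw [expSeries, ← PowerSeries.coeff_zero_eq_constantCoeff_apply, PowerSeries.coeff_mk,
    partitionExp_zero]

noncomputable def expCoeffs (W : K[X]) : K[X] →ₗ[K] (ℕ+ → K) :=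
  LinearMap.pi fun μ => PowerSeries.coeff (μ : ℕ) ∘ₗ LinearMap.mulRight K (expSeries W) ∘ₗ
    (Polynomial.coeToPowerSeries.algHom K).toLinearMap

theorem expCoeffs_apply (W p : K[X]) (μ : ℕ+) :
    expCoeffs W p μ = PowerSeries.coeff (μ : ℕ) ((p : K⟦X⟧) * expSeries W) := rfl

theorem coeff_zero_eulerOp_iterate_X_pow (W : K[X]) (k b : ℕ) :
    ((eulerOp W)^[b] (X ^ (k + 1))).coeff 0 = 0 := by
  cases b with
  | zero => simp
  | succ b =>
    rw [Function.iterate_succ_apply', eulerOp, mul_assoc, ← mul_add, coeff_X_mul_zero]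

variable [CharZero K]

theorem X_mul_derivative_expSeries (W : K[X]) :
    PowerSeries.X * d⁄dX K (expSeries W) = ((X * derivative W : K[X]) : K⟦X⟧) * expSeries W := by
  ext n
  rw [PowerSeries.coeff_X_mul_derivative, PowerSeries.coeff_mul,
    Finset.Nat.sum_antidiagonal_eq_sum_range_succ (fun i j =>
      PowerSeries.coeff i ((X * derivative W : K[X]) : K⟦X⟧) * PowerSeries.coeff j (expSeries W))]
  simp only [expSeries, PowerSeries.coeff_mk, Polynomial.coeff_coe,
    Polynomial.coeff_X_mul_derivative, natCast_mul_partitionExp]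

theorem expCoeffs_eulerOp (W p : K[X]) (μ : ℕ+) :
    expCoeffs W (eulerOp W p) μ = μ * expCoeffs W p μ := by
  have hD : ((eulerOp W p : K[X]) : K⟦X⟧) * expSeries W
      = PowerSeries.X * d⁄dX K ((p : K⟦X⟧) * expSeries W) := by
    rw [Derivation.leibniz, smul_eq_mul, smul_eq_mul, PowerSeries.derivative_coe, mul_add,
      ← mul_assoc, mul_comm PowerSeries.X, mul_assoc, X_mul_derivative_expSeries, eulerOp]
    push_cast
    ring
  rw [expCoeffs_apply, expCoeffs_apply, hD, PowerSeries.coeff_X_mul_derivative]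

theorem expCoeffs_eulerOp_iterate (W p : K[X]) (b : ℕ) (μ : ℕ+) :
    expCoeffs W ((eulerOp W)^[b] p) μ = μ ^ b * expCoeffs W p μ := by
  induction b with
  | zero => simp
  | succ b ih => rw [Function.iterate_succ_apply', expCoeffs_eulerOp, ih, pow_succ']; ring

theorem eq_zero_of_expCoeffs_eq_zero {W p : K[X]} (hp : expCoeffs W p = 0) (h0 : p.coeff 0 = 0) :
    p = 0 := by
  have hmul : (p : K⟦X⟧) * expSeries W = 0 := by
    ext n
    cases n with
    | zero => simp [PowerSeries.coeff_zero_eq_constantCoeff_apply, h0]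
    | succ n => exact (expCoeffs_apply W p ⟨n + 1, n.succ_pos⟩).symm.trans (congrFun hp _)
  have hE : expSeries W ≠ 0 := fun h => by simpa [h] using constantCoeff_expSeries W
  exact Polynomial.coe_eq_zero_iff.mp ((mul_eq_zero.mp hmul).resolve_right hE)

end EulerOperator

section EulerOperatorDegree

variable {K : Type*} [Field K] [CharZero K] {W : K[X]}

theorem natDegree_eulerOp (hW : 0 < W.natDegree) {p : K[X]} (hp : p ≠ 0) :
    (eulerOp W p).natDegree = p.natDegree + W.natDegree := by
  have hq : (X * derivative W).natDegree = W.natDegree := by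
    refine natDegree_eq_of_le_of_coeff_ne_zero
      (natDegree_le_iff_coeff_eq_zero.mpr fun i hi => ?_) ?_
    · rw [coeff_X_mul_derivative, coeff_eq_zero_of_natDegree_lt hi, mul_zero]
    · rw [coeff_X_mul_derivative]
      exact mul_ne_zero (Nat.cast_ne_zero.mpr hW.ne')
        (leadingCoeff_ne_zero.mpr (ne_zero_of_natDegree_gt hW))
  have hq0 : X * derivative W ≠ 0 := ne_zero_of_natDegree_gt (hq ▸ hW)
  have hD : (X * derivative p).natDegree ≤ p.natDegree :=
    natDegree_le_iff_coeff_eq_zero.mpr fun i hi => by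
      rw [coeff_X_mul_derivative, coeff_eq_zero_of_natDegree_lt hi, mul_zero]
  rw [eulerOp, natDegree_add_eq_right_of_natDegree_lt, natDegree_mul hq0 hp, hq, add_comm]
  rw [natDegree_mul hq0 hp, hq]
  omega

theorem eulerOp_iterate_ne_zero (hW : 0 < W.natDegree) {p : K[X]} (hp : p ≠ 0) (b : ℕ) :
    (eulerOp W)^[b] p ≠ 0 := by
  induction b with
  | zero => exact hp
  | succ b ih =>
    rw [Function.iterate_succ_apply']
    exact ne_zero_of_natDegree_gt (n := 0) (by rw [natDegree_eulerOp hW ih]; omega)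

theorem natDegree_eulerOp_iterate (hW : 0 < W.natDegree) {p : K[X]} (hp : p ≠ 0) (b : ℕ) :
    ((eulerOp W)^[b] p).natDegree = p.natDegree + b * W.natDegree := by
  induction b with
  | zero => simp
  | succ b ih =>
    rw [Function.iterate_succ_apply', natDegree_eulerOp hW (eulerOp_iterate_ne_zero hW hp b), ih]
    ring

theorem linearIndependent_eulerOp_iterate_X_pow {d : ℕ} (hW : W.natDegree = d) (hd : 0 < d) :
    LinearIndependent K fun kb : Fin d × ℕ => (eulerOp W)^[kb.2] (X ^ ((kb.1 : ℕ) + 1)) := by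
  have hX : ∀ k : ℕ, (X ^ (k + 1) : K[X]) ≠ 0 := fun k => pow_ne_zero _ X_ne_zero
  refine linearIndependent_of_natDegree_injective
    (fun kb => eulerOp_iterate_ne_zero (hW ▸ hd) (hX _) kb.2) fun kb kb' h => ?_
  simp only [natDegree_eulerOp_iterate (hW ▸ hd) (hX _), natDegree_X_pow, hW] at h
  have h' : (kb.1 : ℕ) + kb.2 * d = kb'.1 + kb'.2 * d := by omega
  have hdiv := congrArg (· / d) h'
  have hmod := congrArg (· % d) h'
  simp only [Nat.add_mul_div_right _ _ hd, Nat.add_mul_mod_self_right,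
    Nat.div_eq_of_lt kb.1.isLt, Nat.div_eq_of_lt kb'.1.isLt, Nat.mod_eq_of_lt kb.1.isLt,
    Nat.mod_eq_of_lt kb'.1.isLt, zero_add] at hdiv hmod
  exact Prod.ext (Fin.ext hmod) hdiv

theorem linearIndependent_expCoeffs_eulerOp_iterate_X_pow {d : ℕ} (hW : W.natDegree = d)
    (hd : 0 < d) : LinearIndependent K fun kb : Fin d × ℕ =>
      expCoeffs W ((eulerOp W)^[kb.2] (X ^ ((kb.1 : ℕ) + 1))) := by
  refine (linearIndependent_eulerOp_iterate_X_pow hW hd).map ?_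
  refine Disjoint.mono_left (b := LinearMap.ker (lcoeff K 0))
    (Submodule.span_le.mpr ?_) (Submodule.disjoint_def.mpr fun p h0 hp => ?_)
  · rintro _ ⟨kb, rfl⟩
    exact coeff_zero_eulerOp_iterate_X_pow W _ _
  · exact eq_zero_of_expCoeffs_eq_zero hp h0

theorem linearIndependent_zpow_mul_coeff_X_pow_mul_expSeries {d : ℕ} (hW : W.natDegree = d)
    (hd : 0 < d) : LinearIndependent K fun kn : Fin d × ℤ => fun μ : ℕ+ =>
      (μ : K) ^ kn.2 *
        PowerSeries.coeff (μ : ℕ) (PowerSeries.X ^ ((kn.1 : ℕ) + 1) * expSeries W) := by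
  refine linearIndependent_zpow_mul_of_pow_mul (fun (k : Fin d) (μ : ℕ+) =>
    PowerSeries.coeff (μ : ℕ) (PowerSeries.X ^ ((k : ℕ) + 1) * expSeries W)) ?_
  have hfam : (fun kb : Fin d × ℕ => fun μ : ℕ+ => (μ : K) ^ kb.2 *
      PowerSeries.coeff (μ : ℕ) (PowerSeries.X ^ ((kb.1 : ℕ) + 1) * expSeries W))
      = fun kb => expCoeffs W ((eulerOp W)^[kb.2] (X ^ ((kb.1 : ℕ) + 1))) := by
    funext kb μ
    rw [expCoeffs_eulerOp_iterate, expCoeffs_apply, Polynomial.coe_pow, Polynomial.coe_X]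
  rw [hfam]
  exact linearIndependent_expCoeffs_eulerOp_iterate_X_pow hW hd

end EulerOperatorDegree

section ScaleVars

variable {σ R : Type*} [CommSemiring R]

theorem aeval_C_mul_X_comp_aeval_C_mul_X {c c' : σ → R} (h : ∀ i, c' i * c i = 1) :
    (MvPolynomial.aeval fun i => MvPolynomial.C (c i) * MvPolynomial.X i).comp
      (MvPolynomial.aeval fun i => MvPolynomial.C (c' i) * MvPolynomial.X i) = AlgHom.id R _ :=
  MvPolynomial.algHom_ext fun i => by
    rw [AlgHom.comp_apply, MvPolynomial.aeval_X, map_mul, MvPolynomial.aeval_C,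
      MvPolynomial.aeval_X, MvPolynomial.algebraMap_eq, ← mul_assoc, ← map_mul, h,
      map_one, one_mul, AlgHom.id_apply]

noncomputable def scaleVars (c : σ → Rˣ) : MvPolynomial σ R ≃ₐ[R] MvPolynomial σ R :=
  AlgEquiv.ofAlgHom (MvPolynomial.aeval fun i => MvPolynomial.C (c i : R) * MvPolynomial.X i)
    (MvPolynomial.aeval fun i => MvPolynomial.C (↑(c i)⁻¹ : R) * MvPolynomial.X i)
    (aeval_C_mul_X_comp_aeval_C_mul_X fun i => (c i).inv_mul)
    (aeval_C_mul_X_comp_aeval_C_mul_X fun i => (c i).mul_inv)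

theorem scaleVars_monomial (c : σ → Rˣ) (α : σ →₀ ℕ) (a : R) :
    scaleVars c (MvPolynomial.monomial α a)
      = MvPolynomial.monomial α ((α.prod fun i k => (c i : R) ^ k) * a) := by
  simp only [scaleVars, AlgEquiv.ofAlgHom_apply, MvPolynomial.aeval_monomial, mul_pow,
    Finsupp.prod_mul, ← map_pow, ← map_finsuppProd, MvPolynomial.algebraMap_eq]
  rw [MvPolynomial.monomial_eq, ← mul_assoc, ← map_mul, mul_comm a]

end ScaleVars

section RationalFunctionField

variable (d : ℕ)

theorem sVar_ne_zero : sVar d ≠ 0 :=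
  (map_ne_zero_iff _ (IsFractionRing.injective _ _)).mpr (MvPolynomial.X_ne_zero _)

theorem qVar_ne_zero {j : ℕ} (h1 : 1 ≤ j) (h2 : j ≤ d) : qVar d j ≠ 0 := by
  rw [qVar, dif_pos ⟨h1, h2⟩]
  exact (map_ne_zero_iff _ (IsFractionRing.injective _ _)).mpr (MvPolynomial.X_ne_zero _)

theorem qVar_of_lt {j : ℕ} (h : d < j) : qVar d j = 0 := by
  rw [qVar, dif_neg (by omega)]

noncomputable def sQ : (Kd d)[X] := ∑ i ∈ Finset.range (d + 1), monomial i (sVar d * qVar d i)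

theorem coeff_sQ (i : ℕ) : (sQ d).coeff i = sVar d * qVar d i := by
  rw [sQ, finsetSum_coeff, Finset.sum_eq_single i (fun j _ hj => coeff_monomial_of_ne _ hj.symm)
    fun hi => ?_, coeff_monomial_same]
  rw [coeff_monomial_same, qVar_of_lt d (by simpa using hi), mul_zero]

theorem natDegree_sQ (hd : 1 ≤ d) : (sQ d).natDegree = d :=
  natDegree_eq_of_le_of_coeff_ne_zero
    (natDegree_le_iff_coeff_eq_zero.mpr fun i hi => by rw [coeff_sQ, qVar_of_lt d hi, mul_zero])
    (by rw [coeff_sQ]; exact mul_ne_zero (sVar_ne_zero d) (qVar_ne_zero d hd le_rfl))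

-- The automorphism `s ↦ μ s` of `K`, fixing every `q_j`.
noncomputable def sScale (μ : ℕ+) : Kd d ≃+* Kd d :=
  IsFractionRing.ringEquivOfRingEquiv (K := Kd d) (L := Kd d)
    (scaleVars (σ := Fin (d + 1))
      (Pi.mulSingle 0 (Units.mk0 (μ : ℚ) (Nat.cast_ne_zero.mpr μ.ne_zero)))).toRingEquiv

theorem sScale_algebraMap_monomial (μ : ℕ+) (α : Fin (d + 1) →₀ ℕ) :
    sScale d μ (algebraMap _ _ (MvPolynomial.monomial α (1 : ℚ)))
      = (μ : Kd d) ^ α 0 * algebraMap _ _ (MvPolynomial.monomial α (1 : ℚ)) := by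
  rw [sScale, IsFractionRing.ringEquivOfRingEquiv_algebraMap, AlgEquiv.coe_ringEquiv,
    scaleVars_monomial, Finsupp.prod_pow,
    Fintype.prod_eq_single 0 fun i hi => by rw [Pi.mulSingle_eq_of_ne hi, Units.val_one, one_pow],
    Pi.mulSingle_eq_same, Units.val_mk0, ← MvPolynomial.C_mul_monomial, map_mul, map_pow,
    map_natCast, map_pow, map_natCast]

theorem sScale_sVar (μ : ℕ+) : sScale d μ (sVar d) = μ * sVar d := by
  have := sScale_algebraMap_monomial d μ (Finsupp.single 0 1)
  rw [Finsupp.single_eq_same, pow_one] at this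
  exact this

theorem sScale_qVar (μ : ℕ+) (j : ℕ) : sScale d μ (qVar d j) = qVar d j := by
  unfold qVar
  split_ifs with h
  · have := sScale_algebraMap_monomial d μ (Finsupp.single ⟨j, by omega⟩ 1)
    rw [Finsupp.single_eq_of_ne (by simp [Fin.ext_iff]; omega), pow_zero, one_mul] at this
    exact this
  · exact map_zero _

theorem Aseq_eq_natCast_mul_sScale (k : ℕ) (μ : ℕ+) :
    Aseq d k μ
      = k * sScale d μ (PowerSeries.coeff (μ : ℕ) (PowerSeries.X ^ k * expSeries (sQ d))) := by
  rw [PowerSeries.coeff_X_pow_mul', Aseq]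
  split_ifs
  · simp only [expSeries, PowerSeries.coeff_mk, partitionExp, coeff_sQ, map_mul, map_natCast,
      map_sum, map_inv₀, map_pow, map_multiset_prod, Multiset.map_map, Function.comp_def,
      sScale_sVar, sScale_qVar, Multiset.prod_map_mul, Multiset.map_const',
      Multiset.prod_replicate, mul_assoc]
  · rw [map_zero, mul_zero]

end RationalFunctionField

section Descaling

variable (d : ℕ)

noncomputable def descaledSeq (p : (Fin (d + 1) →₀ ℕ) × (Fin d × ℤ)) (μ : ℕ+) : Kd d :=
  algebraMap _ (Kd d) (MvPolynomial.monomial p.1 (1 : ℚ)) * ((μ : Kd d) ^ p.2.2 *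
    (((p.2.1 : ℕ) + 1 : ℕ) * PowerSeries.coeff (μ : ℕ)
      (PowerSeries.X ^ ((p.2.1 : ℕ) + 1) * expSeries (sQ d))))

theorem linearIndependent_descaledSeq (hd : 1 ≤ d) : LinearIndependent ℚ (descaledSeq d) := by
  have hmon : LinearIndependent ℚ fun α : Fin (d + 1) →₀ ℕ =>
      algebraMap _ (Kd d) (MvPolynomial.monomial α (1 : ℚ)) := by
    simpa [Function.comp_def] using
      (MvPolynomial.basisMonomials (Fin (d + 1)) ℚ).linearIndependent.map'
        ((Algebra.linearMap (MvPolynomial (Fin (d + 1)) ℚ) (Kd d)).restrictScalars ℚ)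
        (LinearMap.ker_eq_bot.mpr (IsFractionRing.injective _ _))
  have hseq := (linearIndependent_zpow_mul_coeff_X_pow_mul_expSeries (natDegree_sQ d hd)
    hd).units_smul fun kn => Units.mk0 (((kn.1 : ℕ) + 1 : ℕ) : Kd d)
      (Nat.cast_ne_zero.mpr (Nat.succ_ne_zero _))
  convert linearIndependent_smul hmon hseq using 1
  funext p μ
  simp only [descaledSeq, Pi.smul_apply, Pi.smul_apply', Units.smul_def, smul_eq_mul]
  rw [Units.val_mk0]
  ring

theorem sScale_descaledSeq (j : Fin d) (m : ℕ) (α : Fin (d + 1) →₀ ℕ) (μ : ℕ+) :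
    sScale d μ (descaledSeq d (α, (j, (m : ℤ) - α 0)) μ)
      = algebraMap _ (Kd d) (MvPolynomial.monomial α (1 : ℚ)) *
          (Aseq d ((j : ℕ) + 1) μ * μ ^ m) := by
  have hpow : (μ : Kd d) ^ α 0 * (μ : Kd d) ^ ((m : ℤ) - α 0) = (μ : Kd d) ^ m := by
    rw [← zpow_natCast, ← zpow_add₀ (Nat.cast_ne_zero.mpr μ.ne_zero), add_sub_cancel,
      zpow_natCast]
  rw [descaledSeq, map_mul, map_mul, map_mul, map_zpow₀, map_natCast, map_natCast,
    sScale_algebraMap_monomial, Aseq_eq_natCast_mul_sScale, ← hpow]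
  ring

theorem linearIndependent_monomial_smul_Aseq (hd : 1 ≤ d) :
    LinearIndependent ℚ fun p : (Fin d × ℕ) × (Fin (d + 1) →₀ ℕ) =>
      MvPolynomial.monomial p.2 (1 : ℚ) •
        fun μ : ℕ+ => Aseq d ((p.1.1 : ℕ) + 1) μ * (μ : Kd d) ^ p.1.2 := by
  let e : (Fin d × ℕ) × (Fin (d + 1) →₀ ℕ) → (Fin (d + 1) →₀ ℕ) × (Fin d × ℤ) :=
    fun p => (p.2, (p.1.1, p.1.2 - p.2 0))
  have he : Function.Injective e := fun p p' h => by
    simp only [e, Prod.mk.injEq] at h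
    obtain ⟨h2, h1, hm⟩ := h
    rw [h2] at hm
    exact Prod.ext (Prod.ext h1 (by omega)) h2
  let scale : (ℕ+ → Kd d) →ₗ[ℚ] (ℕ+ → Kd d) :=
    LinearMap.pi fun μ => (sScale d μ).toAddMonoidHom.toRatLinearMap ∘ₗ LinearMap.proj μ
  have hscale : LinearMap.ker scale = ⊥ := LinearMap.ker_eq_bot.mpr fun f g h =>
    funext fun μ => (sScale d μ).injective (congrFun h μ)
  have hfam : (fun p : (Fin d × ℕ) × (Fin (d + 1) →₀ ℕ) => MvPolynomial.monomial p.2 (1 : ℚ) •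
      fun μ : ℕ+ => Aseq d ((p.1.1 : ℕ) + 1) μ * (μ : Kd d) ^ p.1.2)
      = scale ∘ descaledSeq d ∘ e := by
    funext p μ
    exact (Algebra.smul_def _ _).trans (sScale_descaledSeq d p.1.1 p.1.2 p.2 μ).symm
  rw [hfam]
  exact ((linearIndependent_descaledSeq d hd).comp e he).map' scale hscale

end Descaling

/-- The sequences `μ ↦ A_{μ,j} μ^m` on `ℤ_{>0}`, indexed by `j ∈ {1,…,d}` and `m ≥ 0`, are
linearly independent over `K = ℚ(s, q_1, …, q_d)`. -/
theorem Aseq_linearIndependent (d : ℕ) (hd : 1 ≤ d) :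
    LinearIndependent (Kd d)
      (fun jm : Fin d × ℕ =>
        (fun μ : ℕ+ => Aseq d ((jm.1 : ℕ) + 1) (μ : ℕ) * (((μ : ℕ) : Kd d)) ^ jm.2 :
          ℕ+ → Kd d)) := by
  rw [← LinearIndependent.iff_fractionRing (MvPolynomial (Fin (d + 1)) ℚ) (Kd d)]
  refine LinearIndependent.of_smul_of_span_eq_top (w := fun α => MvPolynomial.monomial α (1 : ℚ))
    ?_ (linearIndependent_monomial_smul_Aseq d hd)
  simpa using (MvPolynomial.basisMonomials (Fin (d + 1)) ℚ).span_eq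
end

section
/- For positive integers μ_1, μ_2, the genus-0 part of the disconnected-to-connected reduction for two-point double Hurwitz numbers is: DH_{0,2}(μ_1, μ_2) = (1/(μ_1 μ_2)) Σ_{a=1}^{μ_2} a · (Σ_{λ ⊢ μ_1+a} (μ_1 s)^{ℓ(λ)} q_λ/|Aut(λ)|) · (Σ_{λ ⊢ μ_2−a} (μ_2 s)^{ℓ(λ)} q_λ/|Aut(λ)|) when restricted to the coefficient of s^{(number of q-factors)} matching genus 0; equivalently, DH_{0,2}(μ_1, μ_2) = −[X_1^{μ_1} X_2^{μ_2}] Σ_{a≥1} z_1^{−a} z_2^{a}/a, where z_i^{±a} are expanded in X_i = z_i e^{−sQ(z_i)} via Lagrange inversion. -/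
open PowerSeries Finset

/-- The coefficient of `z^k` in `exp f`, for a power series `f` with zero constant term. -/
noncomputable def expCoeff (R : Type*) [CommRing R] [Algebra ℚ R]
    (f : PowerSeries R) (k : ℕ) : R :=
  ∑ n ∈ Finset.range (k + 1),
    algebraMap ℚ R ((n.factorial : ℚ))⁻¹ * PowerSeries.coeff (R := R) k (f ^ n)

/-- `Q(z) = ∑_{j=1}^d q_j z^j`. -/
noncomputable def Qser (R : Type*) [CommRing R] (d : ℕ) (q : ℕ → R) : PowerSeries R :=
  ∑ i ∈ Finset.Icc 1 d, PowerSeries.C (R := R) (q i) * PowerSeries.X ^ i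

/-- `X(z) = z · exp(−s Q(z))`. -/
noncomputable def Xser (R : Type*) [CommRing R] [Algebra ℚ R]
    (d : ℕ) (q : ℕ → R) (s : R) : PowerSeries R :=
  PowerSeries.X * PowerSeries.mk (expCoeff R (-(PowerSeries.C (R := R) s * Qser R d q)))

/-- `exp(−a s Q(z))` as a power series, for `a : ℕ`. -/
noncomputable def expNegASQ (R : Type*) [CommRing R] [Algebra ℚ R]
    (d : ℕ) (q : ℕ → R) (s : R) (a : ℕ) : PowerSeries R :=
  PowerSeries.mk (expCoeff R (-(PowerSeries.C (R := R) ((a : R) * s) * Qser R d q)))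

/-- `∑_{λ ⊢ n} x^{ℓ(λ)} q_λ / |Aut(λ)|`. -/
noncomputable def partitionSum (R : Type*) [CommRing R] [Algebra ℚ R]
    (q : ℕ → R) (x : R) (n : ℕ) : R :=
  ∑ P : n.Partition,
    algebraMap ℚ R ((autCard P : ℚ))⁻¹ * x ^ (Multiset.card P.parts) * (P.parts.map q).prod

/-!
Write `X = z g` with `g = e^{-sQ}` and `h = e^{sQ} = g⁻¹` (below, `z` is `PowerSeries.X`).
By Lagrange inversion the coefficient of `X^μ` in a series `A(z)` is `[z^μ] A W_μ` with
`W_μ = h^{μ+1} dX/dz = h^μ + z g' h^{μ+1}`; this rests on the residue identity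
`μ [z^k] z g' h^{μ+1} = -k [z^k] h^μ`, the coefficient form of `d(h^μ)/dz = -μ g' h^{μ+1}`.
It gives `μ₂ [X^{μ₂}] z^a = a [z^{μ₂-a}] h^{μ₂}` and `μ₁ [X^{μ₁+a}] g^a = -a [z^{μ₁+a}] h^{μ₁}`,
while `h^μ = e^{μsQ}` and, by the multinomial theorem,
`[z^n] e^{xQ} = ∑_{λ ⊢ n} x^{ℓ(λ)} q_λ / |Aut λ|`.
-/

theorem algebraMap_inv_natCast_mul_natCast_mul {R : Type*} [Semiring R] [Algebra ℚ R] {n : ℕ}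
    (hn : n ≠ 0) (x : R) : algebraMap ℚ R (n : ℚ)⁻¹ * (n * x) = x := by
  rw [← mul_assoc, ← map_natCast (algebraMap ℚ R), ← map_mul,
    inv_mul_cancel₀ (Nat.cast_ne_zero.2 hn), map_one, one_mul]

theorem Multiset.prod_factorial_count_mul_countPerms (k : Multiset ℕ) :
    (∏ i ∈ k.toFinset, (k.count i).factorial) * k.countPerms = (Multiset.card k).factorial := by
  rw [← Multiset.toFinset_sum_count_eq, ← Nat.multinomial_spec]
  rfl

namespace PowerSeries

section CommSemiring

variable {R : Type*} [CommSemiring R]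

theorem coeff_X_mul_derivative_s18 (f : R⟦X⟧) (k : ℕ) : coeff k (X * d⁄dX R f) = k * coeff k f := by
  cases k with
  | zero => rw [mul_comm, coeff_zero_mul_X, Nat.cast_zero, zero_mul]
  | succ n => rw [coeff_succ_X_mul, coeff_derivative, Nat.cast_succ, mul_comm]

theorem coeff_X_mul_pow_of_lt (g : R⟦X⟧) {ν k : ℕ} (hk : k < ν) : coeff k ((X * g) ^ ν) = 0 := by
  rw [mul_pow, coeff_X_pow_mul', if_neg (not_le.2 hk)]

theorem prod_map_C_mul_X_pow (q : ℕ → R) (k : Multiset ℕ) :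
    (k.map fun i => C (q i) * X ^ i).prod = C (k.map q).prod * X ^ k.sum := by
  induction k using Multiset.induction_on with
  | empty => simp
  | cons i k ih =>
    simp only [Multiset.map_cons, Multiset.prod_cons, ih, map_mul, Multiset.sum_cons, pow_add]
    ring

theorem coeff_sum_C_mul_X_pow_pow (s : Finset ℕ) (q : ℕ → R) (m n : ℕ) :
    coeff n ((∑ i ∈ s, C (q i) * X ^ i) ^ m) =
      ∑ k ∈ s.sym m, if n = (k : Multiset ℕ).sum then
        ((k : Multiset ℕ).countPerms : R) * ((k : Multiset ℕ).map q).prod else 0 := by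
  rw [sum_pow, map_sum]
  refine sum_congr rfl fun k _ => ?_
  rw [prod_map_C_mul_X_pow, ← map_natCast C, ← mul_assoc, ← map_mul, coeff_C_mul_X_pow]
  rfl

end CommSemiring

section Exp

variable {R : Type*} [CommRing R]

theorem coeff_subst_eq_sum_range (f : R⟦X⟧) {g : R⟦X⟧} (hg : constantCoeff g = 0) (k : ℕ) :
    coeff k (f.subst g) = ∑ n ∈ range (k + 1), coeff n f * coeff k (g ^ n) := by
  rw [coeff_subst' (HasSubst.of_constantCoeff_zero' hg)]
  refine finsum_eq_sum_of_support_subset _ fun n hn => ?_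
  by_contra hnk
  refine hn ?_
  have hkn : k < n := by simpa using hnk
  simp only [smul_eq_mul, X_pow_dvd_iff.1 (pow_dvd_pow_of_dvd (X_dvd_iff.2 hg) n) k hkn, mul_zero]

variable [Algebra ℚ R] {f : R⟦X⟧}

theorem mk_expCoeff_C_mul (hf : constantCoeff f = 0) (x : R) :
    mk (expCoeff R (C x * f)) = (rescale x (exp R)).subst f := by
  ext k
  rw [coeff_mk, expCoeff, coeff_subst_eq_sum_range _ hf]
  refine sum_congr rfl fun n _ => ?_
  rw [mul_pow, ← map_pow, coeff_C_mul, coeff_rescale, coeff_exp, one_div]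
  ring

theorem subst_rescale_exp_mul (hf : constantCoeff f = 0) (x y : R) :
    (rescale x (exp R)).subst f * (rescale y (exp R)).subst f =
      (rescale (x + y) (exp R)).subst f := by
  rw [← subst_mul (HasSubst.of_constantCoeff_zero' hf), exp_mul_exp_eq_exp_add]

theorem subst_rescale_exp_mul_neg (hf : constantCoeff f = 0) (x : R) :
    (rescale (-x) (exp R)).subst f * (rescale x (exp R)).subst f = 1 := by
  rw [subst_rescale_exp_mul hf, neg_add_cancel, rescale_zero]
  simp [← coe_substAlgHom (HasSubst.of_constantCoeff_zero' hf)]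

theorem subst_rescale_exp_pow (hf : constantCoeff f = 0) (x : R) (m : ℕ) :
    ((rescale x (exp R)).subst f) ^ m = (rescale (m * x) (exp R)).subst f := by
  rw [← subst_pow (HasSubst.of_constantCoeff_zero' hf), ← map_pow, exp_pow_eq_rescale_exp,
    rescale_rescale, mul_comm]

end Exp

section Lagrange

variable {R : Type*} [CommRing R] {g h : R⟦X⟧}

/-- `A = ∑ ν, b ν * φ ^ ν`, read degree by degree (complete when `constantCoeff φ = 0`). -/
def IsPowerExpansion (φ : R⟦X⟧) (b : ℕ → R) (A : R⟦X⟧) : Prop :=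
  ∀ k, coeff k A = ∑ ν ∈ range (k + 1), b ν * coeff k (φ ^ ν)

theorem derivative_pow_of_mul_eq_one (hgh : g * h = 1) (b : ℕ) :
    d⁄dX R (h ^ b) = -(b * (d⁄dX R g * h ^ (b + 1))) := by
  have hDh : d⁄dX R h = -(d⁄dX R g * h ^ 2) := by
    have h0 := congrArg (d⁄dX R) hgh
    rw [Derivation.leibniz, Derivation.map_one_eq_zero, smul_eq_mul, smul_eq_mul] at h0
    linear_combination h * h0 - d⁄dX R h * hgh
  rcases b with _ | b
  · simp
  · rw [Derivation.leibniz_pow, hDh, smul_eq_mul, nsmul_eq_mul]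
    push_cast
    ring

theorem natCast_mul_coeff_X_mul_derivative_mul_pow (hgh : g * h = 1) (b k : ℕ) :
    b * coeff k (X * d⁄dX R g * h ^ (b + 1)) = -(k * coeff k (h ^ b)) := by
  have hXD : X * d⁄dX R (h ^ b) = -(C (b : R) * (X * d⁄dX R g * h ^ (b + 1))) := by
    rw [derivative_pow_of_mul_eq_one hgh, map_natCast]
    ring
  have h1 := congrArg (coeff k) hXD
  rw [coeff_X_mul_derivative_s18, map_neg, coeff_C_mul] at h1
  linear_combination h1

/-- `h ^ (μ + 1)` times the derivative of `X * g`, when `g * h = 1`. -/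
noncomputable def lagrangeKernel (g h : R⟦X⟧) (μ : ℕ) : R⟦X⟧ :=
  h ^ μ + X * d⁄dX R g * h ^ (μ + 1)

theorem natCast_mul_coeff_lagrangeKernel (hgh : g * h = 1) (μ k : ℕ) :
    μ * coeff k (lagrangeKernel g h μ) = (μ - k) * coeff k (h ^ μ) := by
  rw [lagrangeKernel, map_add, mul_add, natCast_mul_coeff_X_mul_derivative_mul_pow hgh]
  ring

theorem pow_mul_lagrangeKernel_add (hgh : g * h = 1) (a μ : ℕ) :
    g ^ a * lagrangeKernel g h (μ + a) = lagrangeKernel g h μ := by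
  have hcancel : ∀ n, g ^ a * h ^ (n + a) = h ^ n := fun n => by
    rw [pow_add, mul_left_comm, ← mul_pow, hgh, one_pow, mul_one]
  rw [lagrangeKernel, lagrangeKernel, mul_add, ← hcancel μ, ← hcancel (μ + 1), add_right_comm]
  ring

variable [Algebra ℚ R]

theorem coeff_lagrangeKernel_self (hgh : g * h = 1) (μ : ℕ) :
    coeff μ (lagrangeKernel g h μ) = if μ = 0 then 1 else 0 := by
  split_ifs with hμ
  · simp [hμ, lagrangeKernel]
  · have h0 := natCast_mul_coeff_lagrangeKernel hgh μ μ
    rw [sub_self, zero_mul] at h0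
    rw [← algebraMap_inv_natCast_mul_natCast_mul hμ (coeff μ _), h0, mul_zero]

theorem coeff_X_mul_pow_mul_lagrangeKernel (hgh : g * h = 1) {ν μ : ℕ} (hνμ : ν ≤ μ) :
    coeff μ ((X * g) ^ ν * lagrangeKernel g h μ) = if ν = μ then 1 else 0 := by
  obtain ⟨j, rfl⟩ := Nat.exists_eq_add_of_le' hνμ
  rw [mul_pow, mul_assoc, pow_mul_lagrangeKernel_add hgh, coeff_X_pow_mul', if_pos hνμ,
    Nat.add_sub_cancel, coeff_lagrangeKernel_self hgh]
  simp

theorem IsPowerExpansion.eq_coeff_mul_lagrangeKernel (hgh : g * h = 1) {A : R⟦X⟧} {b : ℕ → R}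
    (hA : IsPowerExpansion (X * g) b A) (μ : ℕ) : b μ = coeff μ (A * lagrangeKernel g h μ) := by
  set B := ∑ ν ∈ range (μ + 1), C (b ν) * (X * g) ^ ν
  have htrunc : trunc (μ + 1) A = trunc (μ + 1) B := by
    ext i
    rw [coeff_trunc, coeff_trunc]
    split_ifs with hi
    · rw [hA, map_sum]
      simp only [coeff_C_mul]
      refine sum_subset (range_subset_range.2 hi) fun ν _ hν => ?_
      rw [coeff_X_mul_pow_of_lt g (by simpa using hν), mul_zero]
    · rfl
  calc b μ = ∑ ν ∈ range (μ + 1), b ν * if ν = μ then 1 else 0 := by simp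
    _ = coeff μ (B * lagrangeKernel g h μ) := by
      rw [sum_mul, map_sum]
      refine sum_congr rfl fun ν hν => ?_
      rw [mul_assoc, coeff_C_mul,
        coeff_X_mul_pow_mul_lagrangeKernel hgh (Nat.lt_succ_iff.1 (mem_range.1 hν))]
    _ = coeff μ (A * lagrangeKernel g h μ) := by
      rw [← coeff_coe_trunc_of_lt μ.lt_succ_self, ← trunc_trunc_mul, ← htrunc, trunc_trunc_mul,
        coeff_coe_trunc_of_lt μ.lt_succ_self]

theorem IsPowerExpansion.eq_zero_of_X_pow (hgh : g * h = 1) {a μ : ℕ} {b : ℕ → R}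
    (hb : IsPowerExpansion (X * g) b (X ^ a)) (hμa : μ < a) : b μ = 0 := by
  rw [hb.eq_coeff_mul_lagrangeKernel hgh, coeff_X_pow_mul', if_neg (not_le.2 hμa)]

theorem IsPowerExpansion.natCast_mul_of_X_pow (hgh : g * h = 1) {a μ : ℕ} {b : ℕ → R}
    (hb : IsPowerExpansion (X * g) b (X ^ a)) (haμ : a ≤ μ) :
    μ * b μ = a * coeff (μ - a) (h ^ μ) := by
  rw [hb.eq_coeff_mul_lagrangeKernel hgh, coeff_X_pow_mul', if_pos haμ,
    natCast_mul_coeff_lagrangeKernel hgh, Nat.cast_sub haμ]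
  ring

theorem IsPowerExpansion.natCast_mul_of_pow (hgh : g * h = 1) {a : ℕ} {b : ℕ → R}
    (hb : IsPowerExpansion (X * g) b (g ^ a)) (μ : ℕ) :
    μ * b (μ + a) = -(a * coeff (μ + a) (h ^ μ)) := by
  rw [hb.eq_coeff_mul_lagrangeKernel hgh, pow_mul_lagrangeKernel_add hgh,
    natCast_mul_coeff_lagrangeKernel hgh, Nat.cast_add]
  ring

end Lagrange

end PowerSeries

section DoubleHurwitz

variable {R : Type*} [CommRing R]

theorem constantCoeff_Qser (d : ℕ) (q : ℕ → R) : constantCoeff (Qser R d q) = 0 := by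
  rw [Qser, map_sum]
  refine sum_eq_zero fun i hi => ?_
  rw [map_mul, map_pow, constantCoeff_X, zero_pow (Nat.one_le_iff_ne_zero.1 (mem_Icc.1 hi).1),
    mul_zero]

variable [Algebra ℚ R]

noncomputable def partitionWeight (q : ℕ → R) (x : R) (k : Multiset ℕ) : R :=
  algebraMap ℚ R ((∏ i ∈ k.toFinset, (k.count i).factorial : ℕ) : ℚ)⁻¹ *
    x ^ Multiset.card k * (k.map q).prod

theorem partitionWeight_eq (q : ℕ → R) (x : R) (k : Multiset ℕ) :
    partitionWeight q x k = algebraMap ℚ R ((Multiset.card k).factorial : ℚ)⁻¹ *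
      x ^ Multiset.card k * (k.countPerms * (k.map q).prod) := by
  have h := k.prod_factorial_count_mul_countPerms
  have hcp : k.countPerms ≠ 0 := by
    intro h0
    rw [h0, mul_zero] at h
    exact Nat.factorial_ne_zero _ h.symm
  have hinv : ((∏ i ∈ k.toFinset, (k.count i).factorial : ℕ) : ℚ)⁻¹ =
      ((Multiset.card k).factorial : ℚ)⁻¹ * k.countPerms := by
    rw [← h, Nat.cast_mul, mul_inv, inv_mul_cancel_right₀ (Nat.cast_ne_zero.2 hcp)]
  rw [partitionWeight, hinv, map_mul, map_natCast]
  ring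

theorem partitionSum_eq_sum_sym (d : ℕ) (q : ℕ → R) (hq : ∀ i, d < i → q i = 0) (x : R)
    (n : ℕ) : partitionSum R q x n = ∑ m ∈ range (n + 1), ∑ k ∈ (Icc 1 d).sym m,
      if n = (k : Multiset ℕ).sum then partitionWeight q x k else 0 := by
  rw [partitionSum, sum_sigma']
  symm
  refine sum_bij_ne_zero (fun k hk hne => ⟨k.2,
      fun hi => (mem_Icc.1 (mem_sym_iff.1 (mem_sigma.1 hk).2 _ (Sym.mem_coe.1 hi))).1,
      (ite_ne_right_iff.1 hne).1.symm⟩) (fun _ _ _ => mem_univ _) ?_ ?_ ?_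
  · rintro ⟨m, k⟩ _ _ ⟨m', k'⟩ _ _ h
    have hk : (k : Multiset ℕ) = k' := congrArg Nat.Partition.parts h
    obtain rfl : m = m' := k.2.symm.trans ((congrArg Multiset.card hk).trans k'.2)
    obtain rfl : k = k' := Sym.coe_injective hk
    rfl
  · rintro P - hP
    have hd : ∀ i ∈ P.parts, i ≤ d := by
      intro i hi
      by_contra hid
      refine hP (mul_eq_zero_of_right _ (Multiset.prod_eq_zero ?_))
      exact Multiset.mem_map.2 ⟨i, hi, hq i (not_le.1 hid)⟩
    refine ⟨⟨Multiset.card P.parts, Sym.mk P.parts rfl⟩, ?_, ?_, rfl⟩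
    · refine mem_sigma.2 ⟨mem_range.2 ?_,
        mem_sym_iff.2 fun i hi => mem_Icc.2 ⟨P.parts_pos hi, hd i hi⟩⟩
      have h : Multiset.card P.parts ≤ n := by
        simpa [P.parts_sum] using Multiset.card_nsmul_le_sum fun i hi => P.parts_pos hi
      exact Nat.lt_succ_of_le h
    · exact ne_of_eq_of_ne (if_pos P.parts_sum.symm) hP
  · rintro ⟨m, k⟩ - hne
    exact (if_pos (ite_ne_right_iff.1 hne).1).trans rfl

theorem coeff_subst_Qser (d : ℕ) (q : ℕ → R) (hq : ∀ i, d < i → q i = 0) (x : R) (n : ℕ) :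
    coeff n ((rescale x (exp R)).subst (Qser R d q)) = partitionSum R q x n := by
  rw [coeff_subst_eq_sum_range _ (constantCoeff_Qser d q), partitionSum_eq_sum_sym d q hq]
  refine sum_congr rfl fun m _ => ?_
  rw [Qser, coeff_sum_C_mul_X_pow_pow, mul_sum]
  refine sum_congr rfl fun k _ => ?_
  rw [mul_ite, mul_zero, partitionWeight_eq, Sym.card_coe, coeff_rescale, coeff_exp, one_div,
    mul_comm (x ^ m)]

theorem Xser_eq_X_mul_subst (d : ℕ) (q : ℕ → R) (s : R) :
    Xser R d q s = X * (rescale (-s) (exp R)).subst (Qser R d q) := by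
  rw [Xser, ← neg_mul, ← map_neg, mk_expCoeff_C_mul (constantCoeff_Qser d q)]

theorem expNegASQ_eq_subst_pow (d : ℕ) (q : ℕ → R) (s : R) (a : ℕ) :
    expNegASQ R d q s a = ((rescale (-s) (exp R)).subst (Qser R d q)) ^ a := by
  rw [expNegASQ, ← neg_mul, ← map_neg, mk_expCoeff_C_mul (constantCoeff_Qser d q),
    subst_rescale_exp_pow (constantCoeff_Qser d q), mul_neg]

end DoubleHurwitz

theorem DH02_two_expressions_general (R : Type*) [CommRing R] [Algebra ℚ R]
    (d : ℕ) (q : ℕ → R) (hq : ∀ i, d < i → q i = 0) (s : R)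
    (μ₁ μ₂ : ℕ) (hμ₁ : 0 < μ₁)
    (c : ℕ → ℕ → R)
    (hc : ∀ a : ℕ, 1 ≤ a → ∀ k : ℕ,
      PowerSeries.coeff (R := R) k ((PowerSeries.X : PowerSeries R) ^ a)
        = ∑ ν ∈ Finset.range (k + 1), c a ν * PowerSeries.coeff (R := R) k ((Xser R d q s) ^ ν))
    (e : ℕ → ℕ → R)
    (he : ∀ a : ℕ, 1 ≤ a → ∀ k : ℕ,
      PowerSeries.coeff (R := R) k (expNegASQ R d q s a)
        = ∑ ν ∈ Finset.range (k + 1), e a ν * PowerSeries.coeff (R := R) k ((Xser R d q s) ^ ν)) :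
    (algebraMap ℚ R (((μ₁ : ℚ)) * ((μ₂ : ℚ)))⁻¹ *
        ∑ a ∈ Finset.Icc 1 μ₂, (a : R) *
          partitionSum R q ((μ₁ : R) * s) (μ₁ + a) *
          partitionSum R q ((μ₂ : R) * s) (μ₂ - a)
      = - ∑ a ∈ Finset.Icc 1 μ₂,
          algebraMap ℚ R ((a : ℚ))⁻¹ * e a (μ₁ + a) * c a μ₂)
    ∧ ∀ a : ℕ, μ₂ < a → c a μ₂ = 0 := by
  simp only [Xser_eq_X_mul_subst, expNegASQ_eq_subst_pow] at hc he
  set g : R⟦X⟧ := (rescale (-s) (exp R)).subst (Qser R d q)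
  set h : R⟦X⟧ := (rescale s (exp R)).subst (Qser R d q)
  have hgh : g * h = 1 := subst_rescale_exp_mul_neg (constantCoeff_Qser d q) s
  have hh : ∀ m n : ℕ, coeff n (h ^ m) = partitionSum R q (m * s) n := fun m n => by
    rw [subst_rescale_exp_pow (constantCoeff_Qser d q), coeff_subst_Qser d q hq]
  refine ⟨?_, fun a ha => IsPowerExpansion.eq_zero_of_X_pow hgh (hc a (by omega)) ha⟩
  rw [mul_sum, ← sum_neg_distrib]
  refine sum_congr rfl fun a ha => ?_
  obtain ⟨ha₁, ha₂⟩ := mem_Icc.1 ha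
  have hca := IsPowerExpansion.natCast_mul_of_X_pow hgh (hc a ha₁) ha₂
  have hea := IsPowerExpansion.natCast_mul_of_pow hgh (he a ha₁) μ₁
  rw [hh] at hca hea
  rw [← algebraMap_inv_natCast_mul_natCast_mul (by omega : μ₁ ≠ 0) (e a (μ₁ + a)), hea,
    ← algebraMap_inv_natCast_mul_natCast_mul (by omega : μ₂ ≠ 0) (c a μ₂), hca, mul_inv, map_mul]
  have hinv := algebraMap_inv_natCast_mul_natCast_mul (by omega : a ≠ 0) (1 : R)
  linear_combination (-(algebraMap ℚ R (μ₁ : ℚ)⁻¹ * algebraMap ℚ R (μ₂ : ℚ)⁻¹ * a *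
    partitionSum R q (μ₁ * s) (μ₁ + a) * partitionSum R q (μ₂ * s) (μ₂ - a))) * hinv

/-- The two expressions for the genus-`0`, two-point double Hurwitz generating series
coincide:
`DH_{0,2}(μ₁,μ₂) = (1/(μ₁μ₂)) ∑_{a=1}^{μ₂} a (∑_{λ⊢μ₁+a}(μ₁s)^{ℓ}q_λ/|Aut λ|)
  (∑_{λ⊢μ₂−a}(μ₂s)^{ℓ}q_λ/|Aut λ|) = −[X₁^{μ₁}X₂^{μ₂}] ∑_{a≥1} z₁^{−a} z₂^{a}/a`,
where `z^a` has `X`-expansion coefficients `c a ·` and `z^{−a} = X^{−a} e^{−asQ(z)}`, so that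
`[X^{μ₁}] z^{−a}` is the coefficient `e a (μ₁+a)` of the `X`-expansion of `e^{−asQ(z)}`; only
`a ≤ μ₂` contributes since `c a μ₂ = 0` for `a > μ₂`. -/
theorem DH02_two_expressions (R : Type*) [CommRing R] [Algebra ℚ R]
    (d : ℕ) (q : ℕ → R) (hq : ∀ i, d < i → q i = 0) (s : R)
    (μ₁ μ₂ : ℕ) (hμ₁ : 0 < μ₁) (hμ₂ : 0 < μ₂)
    (c : ℕ → ℕ → R)
    (hc : ∀ a : ℕ, 1 ≤ a → ∀ k : ℕ,
      PowerSeries.coeff (R := R) k ((PowerSeries.X : PowerSeries R) ^ a)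
        = ∑ ν ∈ Finset.range (k + 1), c a ν * PowerSeries.coeff (R := R) k ((Xser R d q s) ^ ν))
    (e : ℕ → ℕ → R)
    (he : ∀ a : ℕ, 1 ≤ a → ∀ k : ℕ,
      PowerSeries.coeff (R := R) k (expNegASQ R d q s a)
        = ∑ ν ∈ Finset.range (k + 1), e a ν * PowerSeries.coeff (R := R) k ((Xser R d q s) ^ ν)) :
    (algebraMap ℚ R (((μ₁ : ℚ)) * ((μ₂ : ℚ)))⁻¹ *
        ∑ a ∈ Finset.Icc 1 μ₂, (a : R) *
          partitionSum R q ((μ₁ : R) * s) (μ₁ + a) *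
          partitionSum R q ((μ₂ : R) * s) (μ₂ - a)
      = - ∑ a ∈ Finset.Icc 1 μ₂,
          algebraMap ℚ R ((a : ℚ))⁻¹ * e a (μ₁ + a) * c a μ₂)
    ∧ ∀ a : ℕ, μ₂ < a → c a μ₂ = 0 :=
  DH02_two_expressions_general R d q hq s μ₁ μ₂ hμ₁ c hc e he
end
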